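/- arXiv:1112.6330 — 4 statements merged into one kernel-verified Lean document; each statement's English description precedes it below -/
import Mathlib

section
/- For positive integers $n_1 \le n_2$ and probabilities $p_1, p_2 \in (0,1)$, the binomial distribution $\mathrm{Bin}(n_1,p_1)$ is stochastically dominated by $\mathrm{Bin}(n_2,p_2)$ if and only if $n_1 \le n_2$ and $(1-p_1)^{n_1} \ge (1-p_2)^{n_2}$. -/
open Finset

/-- The upper tail `ℙ(Bin(n,p) ≥ x)` of a binomial random variable. -/
noncomputable def binomialTail (n : ℕ) (p : ℝ) (x : ℕ) : ℝ :=
  ∑ k ∈ Finset.Icc x n, (n.choose k : ℝ) * p ^ k * (1 - p) ^ (n - k)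

/-!
Necessity is the case `x = 1`, since `ℙ(Bin(n, p) ≥ 1) = 1 - (1 - p) ^ n`. For sufficiency let
`f` and `g` be the mass functions of `Bin(n₁, p₁)` and `Bin(n₂, p₂)`. On `k ≤ n₁` the likelihood
ratio `g k / f k` starts at `(1 - p₂) ^ n₂ / (1 - p₁) ^ n₁ ≤ 1` and passes from `k` to `k + 1` by
the factor `(n₂ - k) / (n₁ - k)` times the odds ratio of `p₂` to `p₁`, which increases with `k`.
Since the ratio at `k + 1` is then at most the `(k + 1)`-st power of the `k`-th factor, once it
reaches `1` at some `k ≥ 1` all later factors are `≥ 1` and it never drops below `1` again. So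
`g - f` changes sign at most once, from negative to positive, and as both have total mass `1`,
every upper tail of `g` dominates the corresponding tail of `f`.
-/

theorem sum_Icc_le_sum_Icc_of_single_crossing {f g : ℕ → ℝ} {N : ℕ}
    (hsum : ∑ k ∈ Icc 0 N, f k = ∑ k ∈ Icc 0 N, g k) (h₀ : g 0 ≤ f 0)
    (hcross : ∀ k, 1 ≤ k → k < N → f k ≤ g k → f (k + 1) ≤ g (k + 1)) (x : ℕ) :
    ∑ k ∈ Icc x N, f k ≤ ∑ k ∈ Icc x N, g k := by
  by_cases hall : ∀ k ∈ Icc x N, f k ≤ g k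
  · exact sum_le_sum hall
  push Not at hall
  obtain ⟨k₀, hk₀, hgf⟩ := hall
  rw [mem_Icc] at hk₀
  have hbelow : ∀ j ∈ range x, g j ≤ f j := by
    intro j hj
    rw [mem_range] at hj
    rcases Nat.eq_zero_or_pos j with rfl | hj₀
    · exact h₀
    by_contra! hfg
    have hup : ∀ i, j ≤ i → i ≤ k₀ → f i ≤ g i := by
      intro i hji
      induction i, hji using Nat.le_induction with
      | base => exact fun _ => hfg.le
      | succ i hji ih => exact fun hi => hcross i (by omega) (by omega) (ih (by omega))
    exact (hup k₀ (by omega) le_rfl).not_gt hgf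
  have hsplit (h : ℕ → ℝ) : ∑ k ∈ range x, h k + ∑ k ∈ Icc x N, h k = ∑ k ∈ Icc 0 N, h k := by
    rw [← Ico_add_one_right_eq_Icc, ← Ico_add_one_right_eq_Icc, ← range_eq_Ico]
    exact sum_range_add_sum_Ico h (by omega)
  linarith [sum_le_sum hbelow, hsplit f, hsplit g]

theorem one_le_succ_of_monotoneOn_ratio {a ρ : ℕ → ℝ} {m : ℕ} (ha₀ : a 0 ≤ 1)
    (hρ : ∀ k < m, 0 < ρ k) (hmono : MonotoneOn ρ (Set.Iio m))
    (hrec : ∀ k < m, a (k + 1) = ρ k * a k) {k : ℕ} (hk : k + 1 < m) (ha : 1 ≤ a (k + 1)) :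
    1 ≤ a (k + 2) := by
  have hρk : 0 < ρ k := hρ k (by omega)
  have hbound : ∀ j ≤ k + 1, a j ≤ ρ k ^ j := by
    intro j hj
    induction j with
    | zero => simpa using ha₀
    | succ j ih =>
      rw [hrec j (by omega), pow_succ']
      exact (mul_le_mul_of_nonneg_left (ih (by omega)) (hρ j (by omega)).le).trans
        (mul_le_mul_of_nonneg_right (hmono (Set.mem_Iio.2 (by omega)) (Set.mem_Iio.2 (by omega)) (by omega))
          (by positivity))
  have hρk₁ : 1 ≤ ρ k :=
    (one_le_pow_iff_of_nonneg hρk.le k.succ_ne_zero).1 (ha.trans (hbound _ le_rfl))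
  calc 1 ≤ ρ (k + 1) * a (k + 1) :=
        one_le_mul_of_one_le_of_one_le
          (hρk₁.trans (hmono (Set.mem_Iio.2 (by omega)) (Set.mem_Iio.2 hk) (by omega))) ha
    _ = a (k + 2) := (hrec _ hk).symm

theorem succ_le_of_monotoneOn_ratio {f g ρ : ℕ → ℝ} {m : ℕ} (hf : ∀ k ≤ m, 0 < f k)
    (h₀ : g 0 ≤ f 0) (hρ : ∀ k < m, 0 < ρ k) (hmono : MonotoneOn ρ (Set.Iio m))
    (hrec : ∀ k < m, g (k + 1) / f (k + 1) = ρ k * (g k / f k)) {k : ℕ} (hk : k + 1 < m)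
    (hfg : f (k + 1) ≤ g (k + 1)) : f (k + 2) ≤ g (k + 2) :=
  (one_le_div (hf _ hk)).1 <| one_le_succ_of_monotoneOn_ratio (a := fun k => g k / f k)
    ((div_le_one (hf 0 (by omega))).2 h₀) hρ hmono hrec hk ((one_le_div (hf _ hk.le)).2 hfg)

theorem monotoneOn_sub_div_sub {n n' : ℕ} (hn : n ≤ n') :
    MonotoneOn (fun k : ℕ => ((n' : ℝ) - k) / (n - k)) (Set.Iio n) := by
  intro i hi j hj hij
  simp only [Set.mem_Iio] at hi hj
  have hi' : (i : ℝ) < n := by exact_mod_cast hi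
  have hj' : (j : ℝ) < n := by exact_mod_cast hj
  have hij' : (i : ℝ) ≤ j := by exact_mod_cast hij
  have hn' : (n : ℝ) ≤ n' := by exact_mod_cast hn
  rw [div_le_div_iff₀ (by linarith) (by linarith)]
  nlinarith

noncomputable def binomialPmf (n : ℕ) (p : ℝ) (k : ℕ) : ℝ :=
  n.choose k * p ^ k * (1 - p) ^ (n - k)

section binomialPmf

variable {n k : ℕ} {p : ℝ}

theorem binomialPmf_nonneg (hp : p ∈ Set.Icc (0 : ℝ) 1) : 0 ≤ binomialPmf n p k := by
  have := hp.1
  have := sub_nonneg.2 hp.2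
  unfold binomialPmf
  positivity

theorem binomialPmf_pos (hp : p ∈ Set.Ioo (0 : ℝ) 1) (hk : k ≤ n) : 0 < binomialPmf n p k := by
  have := Nat.choose_pos hk
  have := hp.1
  have := sub_pos.2 hp.2
  unfold binomialPmf
  positivity

theorem binomialPmf_of_lt (hnk : n < k) (p : ℝ) : binomialPmf n p k = 0 := by
  simp [binomialPmf, Nat.choose_eq_zero_of_lt hnk]

theorem binomialPmf_zero (n : ℕ) (p : ℝ) : binomialPmf n p 0 = (1 - p) ^ n := by
  simp [binomialPmf]

theorem binomialPmf_succ (hk : k < n) (hp : p ≠ 1) :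
    binomialPmf n p (k + 1) = (n - k) / (k + 1) * (p / (1 - p)) * binomialPmf n p k := by
  have hchoose : (n.choose (k + 1) : ℝ) * (k + 1) = n.choose k * (n - k) := by
    rw [← Nat.cast_sub hk.le]
    exact_mod_cast Nat.choose_succ_right_eq n k
  have hpow : (1 - p) ^ (n - k) = (1 - p) ^ (n - (k + 1)) * (1 - p) := by
    rw [← pow_succ]
    congr 1
    omega
  unfold binomialPmf
  rw [hpow]
  field_simp
  linear_combination p ^ (k + 1) * hchoose

theorem binomialPmf_ratio_succ {n' : ℕ} {p' : ℝ} (hk : k < n) (hn : n ≤ n')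
    (hp : p ∈ Set.Ioo (0 : ℝ) 1) (hp' : p' ≠ 1) :
    binomialPmf n' p' (k + 1) / binomialPmf n p (k + 1) =
      (n' - k) / (n - k) * (p' / (1 - p') / (p / (1 - p))) *
        (binomialPmf n' p' k / binomialPmf n p k) := by
  rw [binomialPmf_succ hk hp.2.ne, binomialPmf_succ (hk.trans_le hn) hp']
  have := binomialPmf_pos hp hk.le
  have := hp.1.ne'
  have : (k : ℝ) < n := by exact_mod_cast hk
  have : (n : ℝ) - k ≠ 0 := by linarith
  field_simp

end binomialPmf

theorem binomialTail_eq_sum_Icc_of_le {n N : ℕ} (hn : n ≤ N) (p : ℝ) (x : ℕ) :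
    binomialTail n p x = ∑ k ∈ Icc x N, binomialPmf n p k :=
  sum_subset (Icc_subset_Icc_right hn) fun _ hk hk' =>
    binomialPmf_of_lt (by simp only [mem_Icc] at hk hk'; omega) p

theorem binomialTail_zero (n : ℕ) (p : ℝ) : binomialTail n p 0 = 1 := by
  have h := add_pow p (1 - p) n
  rw [add_sub_cancel, one_pow] at h
  rw [binomialTail, ← Ico_add_one_right_eq_Icc, ← range_eq_Ico]
  exact (sum_congr rfl fun k _ => by ring).trans h.symm

theorem binomialTail_one (n : ℕ) (p : ℝ) : binomialTail n p 1 = 1 - (1 - p) ^ n := by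
  have h := binomialTail_zero n p
  rw [binomialTail, Icc_eq_cons_Ioc n.zero_le, sum_cons, ← Icc_add_one_left_eq_Ioc] at h
  simp only [Nat.choose_zero_right, pow_zero, Nat.sub_zero, Nat.cast_one, one_mul, zero_add] at h
  rw [binomialTail]
  linarith

theorem binomialTail_le_binomialTail {n n' : ℕ} {p p' : ℝ} (hn : n ≤ n')
    (hp : p ∈ Set.Ioo (0 : ℝ) 1) (hp' : p' ∈ Set.Ioo (0 : ℝ) 1)
    (h₀ : (1 - p') ^ n' ≤ (1 - p) ^ n) (x : ℕ) :
    binomialTail n p x ≤ binomialTail n' p' x := by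
  set c := p' / (1 - p') / (p / (1 - p))
  have hc : 0 < c := by
    have := hp.1; have := hp'.1; have := sub_pos.2 hp.2; have := sub_pos.2 hp'.2
    positivity
  have hρ : ∀ k < n, 0 < ((n' : ℝ) - k) / (n - k) * c := by
    intro k hk
    have : (k : ℝ) < n := by exact_mod_cast hk
    have : (n : ℝ) ≤ n' := by exact_mod_cast hn
    have : 0 < ((n' : ℝ) - k) / (n - k) := div_pos (by linarith) (by linarith)
    positivity
  have hmono : MonotoneOn (fun k : ℕ => ((n' : ℝ) - k) / (n - k) * c) (Set.Iio n) :=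
    fun i hi j hj hij => mul_le_mul_of_nonneg_right (monotoneOn_sub_div_sub hn hi hj hij) hc.le
  have h₀' : binomialPmf n' p' 0 ≤ binomialPmf n p 0 := by
    rwa [binomialPmf_zero, binomialPmf_zero]
  rw [binomialTail_eq_sum_Icc_of_le hn, binomialTail]
  refine sum_Icc_le_sum_Icc_of_single_crossing (f := binomialPmf n p) ?_ h₀' ?_ x
  · rw [← binomialTail_eq_sum_Icc_of_le hn, binomialTail_zero]
    exact (binomialTail_zero n' p').symm
  · intro k hk₁ _ hfg
    rcases lt_or_ge k n with hkn | hkn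
    · obtain ⟨j, rfl⟩ := Nat.exists_eq_add_of_le' hk₁
      exact succ_le_of_monotoneOn_ratio (fun k hk => binomialPmf_pos hp hk) h₀' hρ hmono
        (fun k hk => binomialPmf_ratio_succ hk hn hp hp'.2.ne) hkn hfg
    · rw [binomialPmf_of_lt (by omega)]
      exact binomialPmf_nonneg (Set.Ioo_subset_Icc_self hp')

theorem binomial_stochastic_domination_iff_general
    (n₁ n₂ : ℕ) (hn : n₁ ≤ n₂)
    (p₁ p₂ : ℝ) (hp₁ : p₁ ∈ Set.Ioo (0:ℝ) 1) (hp₂ : p₂ ∈ Set.Ioo (0:ℝ) 1) :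
    (∀ x : ℕ, binomialTail n₁ p₁ x ≤ binomialTail n₂ p₂ x) ↔
      (n₁ ≤ n₂ ∧ (1 - p₂) ^ n₂ ≤ (1 - p₁) ^ n₁) := by
  refine ⟨fun hdom => ⟨hn, ?_⟩, fun h => binomialTail_le_binomialTail hn hp₁ hp₂ h.2⟩
  have h₁ := hdom 1
  rw [binomialTail_one, binomialTail_one] at h₁
  linarith

/-- For positive integers `n₁ ≤ n₂` and `p₁, p₂ ∈ (0,1)`, `Bin(n₁,p₁)` is stochastically
dominated by `Bin(n₂,p₂)` iff `n₁ ≤ n₂` and `(1-p₁)^{n₁} ≥ (1-p₂)^{n₂}`. -/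
theorem binomial_stochastic_domination_iff
    (n₁ n₂ : ℕ) (hn₁ : 0 < n₁) (hn₂ : 0 < n₂) (hn : n₁ ≤ n₂)
    (p₁ p₂ : ℝ) (hp₁ : p₁ ∈ Set.Ioo (0:ℝ) 1) (hp₂ : p₂ ∈ Set.Ioo (0:ℝ) 1) :
    (∀ x : ℕ, binomialTail n₁ p₁ x ≤ binomialTail n₂ p₂ x) ↔
      (n₁ ≤ n₂ ∧ (1 - p₂) ^ n₂ ≤ (1 - p₁) ^ n₁) :=
  binomial_stochastic_domination_iff_general n₁ n₂ hn p₁ p₂ hp₁ hp₂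
end

section
/- Let $n$ be a positive integer and let $x \le y$ be positive integers with $y/n < e^{-1}$ (so in particular $\sqrt{x/n}, \sqrt{y/n} \in (0,1)$). Then $x - \mathrm{Bin}(x, \sqrt{x/n})$ is stochastically dominated by $y - \mathrm{Bin}(y, \sqrt{y/n})$. -/
/-!
Let `f j`, `g j` be the probabilities that `x - Bin(x, P)` and `y - Bin(y, Q)` equal `j`, where
`P = √(x/n) ≤ Q = √(y/n)`. The increments of `f j / g j` have the sign of a linear function of `j`
of slope `P - Q ≤ 0`, so the ratio first increases and then decreases. It starts at
`P ^ x / Q ^ y ≥ 1`, hence once `f` drops below `g` it stays below, and since both sum to `1`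
every upper tail of `f` is at most that of `g`. The starting inequality `Q ^ y ≤ P ^ x` says
`(y/n) ^ (y/n) ≤ (x/n) ^ (x/n)`: `s ↦ s ^ s` decreases on `(0, e⁻¹)`.
-/

open Finset

/-- `ℙ(m - Bin(m,p) ≥ t)` for an integer `t`, written out via the binomial pmf. -/
noncomputable def complBinomialTail (m : ℕ) (p : ℝ) (t : ℤ) : ℝ :=
  ∑ k ∈ (Finset.range (m + 1)).filter (fun k : ℕ => t ≤ (m : ℤ) - (k : ℤ)),
    (m.choose k : ℝ) * p ^ k * (1 - p) ^ (m - k)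

def binomTerm (m : ℕ) (a b : ℝ) (j : ℕ) : ℝ := m.choose j * a ^ j * b ^ (m - j)

section binomTerm

variable {m : ℕ} {a b : ℝ}

lemma binomTerm_zero : binomTerm m a b 0 = b ^ m := by
  simp [binomTerm]

lemma binomTerm_eq_zero_of_lt {j : ℕ} (h : m < j) : binomTerm m a b j = 0 := by
  simp [binomTerm, Nat.choose_eq_zero_of_lt h]

lemma binomTerm_nonneg (ha : 0 ≤ a) (hb : 0 ≤ b) (j : ℕ) : 0 ≤ binomTerm m a b j := by
  unfold binomTerm
  positivity

lemma binomTerm_pos (ha : 0 < a) (hb : 0 < b) {j : ℕ} (hj : j ≤ m) : 0 < binomTerm m a b j := by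
  have := Nat.choose_pos hj
  unfold binomTerm
  positivity

lemma succ_mul_binomTerm_succ (j : ℕ) :
    ((j : ℝ) + 1) * b * binomTerm m a b (j + 1) = ((m : ℝ) - j) * a * binomTerm m a b j := by
  rcases lt_or_ge j m with hj | hj
  · have hchoose : (m.choose (j + 1) : ℝ) * (j + 1) = m.choose j * ((m : ℝ) - j) := by
      rw [← Nat.cast_sub hj.le]
      exact_mod_cast Nat.choose_succ_right_eq m j
    rw [binomTerm, binomTerm, show m - j = m - (j + 1) + 1 by omega]
    linear_combination a ^ j * a * b ^ (m - (j + 1)) * b * hchoose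
  · rw [binomTerm_eq_zero_of_lt (by omega : m < j + 1)]
    rcases hj.eq_or_lt with rfl | hj
    · simp
    · simp [binomTerm_eq_zero_of_lt hj]

lemma sum_range_binomTerm {N : ℕ} (hmN : m ≤ N) :
    ∑ j ∈ range (N + 1), binomTerm m a b j = (a + b) ^ m := by
  rw [add_pow, ← sum_subset (range_subset_range.2 (by omega : m + 1 ≤ N + 1))]
  · exact sum_congr rfl fun j _ => by rw [binomTerm]; ring
  · intro j _ hj
    exact binomTerm_eq_zero_of_lt (by simpa using hj)

end binomTerm

lemma complBinomialTail_eq_sum_binomTerm {m N : ℕ} (hmN : m ≤ N) (p : ℝ) (t : ℤ) :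
    complBinomialTail m p t = ∑ j ∈ range (N + 1) with t ≤ (j : ℕ), binomTerm m (1 - p) p j := by
  calc complBinomialTail m p t
      = ∑ j ∈ range (m + 1) with t ≤ (j : ℕ), binomTerm m (1 - p) p j := by
        refine sum_nbij' (m - ·) (m - ·) ?_ ?_ ?_ ?_ ?_ <;> intro k hk <;>
          simp only [mem_filter, mem_range] at hk ⊢
        · omega
        · omega
        · omega
        · omega
        · rw [binomTerm, Nat.choose_symm (by omega), Nat.sub_sub_self (by omega)]
          ring
    _ = _ := by
        refine sum_subset (filter_subset_filter _ (range_subset_range.2 (by omega))) ?_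
        intro j hj hj'
        simp only [mem_filter, mem_range] at hj hj'
        exact binomTerm_eq_zero_of_lt (by omega)

lemma sum_filter_le_of_single_crossing {N : ℕ} {f g : ℕ → ℝ} {p : ℕ → Prop} [DecidablePred p]
    (hp : Monotone p) (hsum : ∑ j ∈ range (N + 1), f j = ∑ j ∈ range (N + 1), g j)
    (hcross : ∀ j < N, f j < g j → f (j + 1) < g (j + 1)) :
    ∑ j ∈ range (N + 1) with p j, f j ≤ ∑ j ∈ range (N + 1) with p j, g j := by
  by_cases hbelow : ∀ j ≤ N, ¬ p j → g j ≤ f j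
  · have hf := sum_filter_add_sum_filter_not (range (N + 1)) p f
    have hg := sum_filter_add_sum_filter_not (range (N + 1)) p g
    have hcompl : ∑ j ∈ range (N + 1) with ¬ p j, g j ≤ ∑ j ∈ range (N + 1) with ¬ p j, f j :=
      sum_le_sum fun j hj => by
        simp only [mem_filter, mem_range] at hj
        exact hbelow j (by omega) hj.2
    linarith
  push Not at hbelow
  obtain ⟨j₀, hj₀N, hj₀, hlt₀⟩ := hbelow
  have hlt : ∀ j, j₀ ≤ j → j ≤ N → f j < g j := by
    intro j hj
    induction j, hj using Nat.le_induction with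
    | base => exact fun _ => hlt₀
    | succ j _ ih => exact fun hjN => hcross j (by omega) (ih (by omega))
  refine sum_le_sum fun j hj => (hlt j ?_ ?_).le
  all_goals simp only [mem_filter, mem_range] at hj
  · by_contra! hj₀j
    exact hj₀ (hp hj₀j.le hj.2)
  · omega

lemma succ_le_of_lt_apply_zero {N : ℕ} {r w : ℕ → ℝ} (hw : Antitone w)
    (hup : ∀ i < N, 0 ≤ w i → r i ≤ r (i + 1)) (hdown : ∀ i < N, w i ≤ 0 → r (i + 1) ≤ r i)
    {j : ℕ} (hj : j < N) (hr : r j < r 0) : r (j + 1) ≤ r j := by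
  refine hdown j hj (not_lt.1 fun hwj => hr.not_ge ?_)
  have hmono : ∀ i ≤ j, r 0 ≤ r i := by
    intro i hi
    induction i with
    | zero => exact le_rfl
    | succ i ih => exact (ih (by omega)).trans (hup i (by omega) (hwj.le.trans (hw (by omega))))
  exact hmono j le_rfl

lemma binomTerm_crossing {x y : ℕ} {P Q : ℝ} (hP : 0 < P) (hPQ : P ≤ Q) (hQ : Q < 1)
    (h0 : Q ^ y ≤ P ^ x) {j : ℕ} (hj : j < y)
    (hlt : binomTerm x (1 - P) P j < binomTerm y (1 - Q) Q j) :
    binomTerm x (1 - P) P (j + 1) < binomTerm y (1 - Q) Q (j + 1) := by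
  set f := binomTerm x (1 - P) P
  set g := binomTerm y (1 - Q) Q
  have hQ0 : 0 < Q := hP.trans_le hPQ
  have hf : ∀ i, 0 ≤ f i := binomTerm_nonneg (by linarith) hP.le
  have hg : ∀ i ≤ y, 0 < g i := fun i hi => binomTerm_pos (by linarith) hQ0 hi
  set w : ℕ → ℝ := fun i => ((x : ℝ) - i) * (1 - P) * Q - ((y : ℝ) - i) * (1 - Q) * P
  have hw : Antitone w := antitone_nat_of_succ_le fun i => by
    simp only [w]
    push_cast
    linear_combination hPQ
  have hstep : ∀ i < y,
      f (i + 1) / g (i + 1) - f i / g i = f i * w i / ((i + 1) * (P * Q) * g (i + 1)) := by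
    intro i hi
    have e1 := succ_mul_binomTerm_succ (m := x) (a := 1 - P) (b := P) i
    have e2 := succ_mul_binomTerm_succ (m := y) (a := 1 - Q) (b := Q) i
    have := hg i hi.le
    have := hg (i + 1) hi
    field_simp
    linear_combination Q * g i * e1 - P * f i * e2
  have hr0 : 1 ≤ f 0 / g 0 := by
    rw [one_le_div (hg 0 (Nat.zero_le y))]
    simpa only [f, g, binomTerm_zero] using h0
  have hdecr := succ_le_of_lt_apply_zero (r := fun i => f i / g i) hw
    (fun i hi hwi => sub_nonneg.1 <| hstep i hi ▸ div_nonneg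
      (mul_nonneg (hf i) hwi) (by have := hg (i + 1) hi; positivity))
    (fun i hi hwi => sub_nonpos.1 <| hstep i hi ▸ div_nonpos_of_nonpos_of_nonneg
      (mul_nonpos_of_nonneg_of_nonpos (hf i) hwi) (by have := hg (i + 1) hi; positivity))
    hj ((div_lt_one (hg j hj.le)).2 hlt |>.trans_le hr0)
  exact (div_lt_one (hg (j + 1) hj)).1 (hdecr.trans_lt ((div_lt_one (hg j hj.le)).2 hlt))

lemma complBinomialTail_le_of_pow_le {x y : ℕ} {P Q : ℝ} (hxy : x ≤ y) (hP : 0 < P)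
    (hPQ : P ≤ Q) (hQ : Q < 1) (h0 : Q ^ y ≤ P ^ x) (t : ℤ) :
    complBinomialTail x P t ≤ complBinomialTail y Q t := by
  rw [complBinomialTail_eq_sum_binomTerm hxy, complBinomialTail_eq_sum_binomTerm le_rfl]
  refine sum_filter_le_of_single_crossing (fun i j hij hi => hi.trans (by exact_mod_cast hij))
    ?_ fun j hj => binomTerm_crossing hP hPQ hQ h0 hj
  simp only [sum_range_binomTerm hxy, sum_range_binomTerm le_rfl, sub_add_cancel, one_pow]

lemma div_pow_self_le {n x y : ℕ} (hn : 0 < n) (hx : 0 < x) (hxy : x ≤ y)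
    (hy : (y : ℝ) / n ≤ Real.exp (-1)) : ((y : ℝ) / n) ^ y ≤ ((x : ℝ) / n) ^ x := by
  have hs : 0 < (x : ℝ) / n := by positivity
  have hst : (x : ℝ) / n ≤ y / n := by gcongr
  have hmul : (y : ℝ) / n * Real.log (y / n) ≤ x / n * Real.log (x / n) :=
    Real.mul_log_strictAntiOn.antitoneOn ⟨hs.le, hst.trans hy⟩ ⟨(hs.trans_le hst).le, hy⟩ hst
  rw [← Real.log_le_log_iff (pow_pos (hs.trans_le hst) y) (pow_pos hs x), Real.log_pow,
    Real.log_pow]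
  have hn' : (0 : ℝ) < n := by positivity
  calc (y : ℝ) * Real.log (y / n) = n * ((y : ℝ) / n * Real.log (y / n)) := by field_simp
    _ ≤ n * ((x : ℝ) / n * Real.log (x / n)) := by gcongr
    _ = x * Real.log (x / n) := by field_simp

/-- If `x ≤ y` are positive integers with `y/n < e⁻¹`, then `x - Bin(x, √(x/n))` is
stochastically dominated by `y - Bin(y, √(y/n))`. -/
theorem compl_binomial_domination
    (n x y : ℕ) (hn : 0 < n) (hx : 0 < x) (hxy : x ≤ y)
    (hy : (y : ℝ) / n < Real.exp (-1)) :
    ∀ t : ℤ, complBinomialTail x (Real.sqrt ((x : ℝ) / n)) t ≤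
      complBinomialTail y (Real.sqrt ((y : ℝ) / n)) t := by
  have hsqrt_pow (z : ℕ) : Real.sqrt ((z : ℝ) / n) ^ (2 * z) = ((z : ℝ) / n) ^ z := by
    rw [pow_mul, Real.sq_sqrt (by positivity)]
  have hpow : Real.sqrt ((y : ℝ) / n) ^ y ≤ Real.sqrt ((x : ℝ) / n) ^ x := by
    rw [← pow_le_pow_iff_left₀ (by positivity) (by positivity) two_ne_zero, ← pow_mul, ← pow_mul,
      mul_comm, hsqrt_pow, mul_comm, hsqrt_pow]
    exact div_pow_self_le hn hx hxy hy.le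
  have hQ : Real.sqrt ((y : ℝ) / n) < 1 := by
    rw [Real.sqrt_lt' one_pos, one_pow]
    exact hy.trans (Real.exp_lt_one_iff.2 (by norm_num))
  exact complBinomialTail_le_of_pow_le hxy (Real.sqrt_pos.2 (by positivity))
    (Real.sqrt_le_sqrt (by gcongr)) hQ hpow
end

section
/- Let $A$ be a set of $m$ points and $F$ a uniformly random perfect matching of $A$ (so $m$ is even). For $X \subseteq A$ with $|X| = k \le m/2$, let $F(X)$ denote the set of points matched to points of $X$. Then $|X \cap F(X)|$ is stochastically dominated by $\mathrm{Bin}(k, \sqrt{k/m})$. -/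
open Finset

/-- The perfect matchings of `Fin m`, viewed as fixed-point-free involutions. -/
def perfectMatchings (m : ℕ) : Finset (Equiv.Perm (Fin m)) :=
  Finset.univ.filter (fun f => ∀ x, f (f x) = x ∧ f x ≠ x)

/-!
Fix `a ∈ X` and condition on its partner `b`, which is uniform on the other `m - 1` points.
With probability `q = (k - 1)/(m - 1)` it lies in `X`, contributing the pair `{a, b}` and leaving
`k - 2` points of `X`; otherwise one point of `X` is lost and nothing is contributed. In both
cases the rest is a uniform matching of the remaining `m - 2` points. Since `q ≤ p ^ 2` for
`p = √(k/m)`, this recursion is dominated by Pascal's recursion for the tails of `Bin(k, p)`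
(two steps of it put weight `p ^ 2` on "two successes"), and the condition
`|X| - 1 ≤ p ^ 2 (|A| - 1)` survives the removal of a pair because `p ^ 2 ≤ 1/2`.
-/

open Equiv

lemma card_sdiff_pair {α : Type*} [DecidableEq α] {A : Finset α} {a b : α} (ha : a ∈ A)
    (hb : b ∈ A) (hab : a ≠ b) : #(A \ {a, b}) = #A - 2 := by
  rw [card_sdiff_of_subset (insert_subset ha (singleton_subset_iff.2 hb)), card_pair hab]

section PairedWithin

variable {α : Type*} [DecidableEq α]

def pairedWithin (f : Perm α) (X : Finset α) : ℕ := #{y ∈ X | f y ∈ X}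

lemma card_inter_image_eq_pairedWithin {f : Perm α} (hf : f * f = 1) (X : Finset α) :
    #(X ∩ X.image f) = pairedWithin f X := by
  have hff : ∀ y, f (f y) = y := fun y => by rw [← Perm.mul_apply, hf, Perm.one_apply]
  congr 1
  ext y
  simp only [mem_inter, mem_image, mem_filter]
  exact and_congr_right fun _ => ⟨fun ⟨z, hz, hzy⟩ => hzy ▸ (hff z).symm ▸ hz,
    fun hy => ⟨f y, hy, hff y⟩⟩

lemma pairedWithin_swap_mul_of_mem {g : Perm α} {X : Finset α} {a b : α} (hga : g a = a)
    (hgb : g b = b) (hab : a ≠ b) (ha : a ∈ X) (hb : b ∈ X) :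
    pairedWithin (swap a b * g) X = pairedWithin g (X \ {a, b}) + 2 := by
  have hX : {y ∈ X | (swap a b * g) y ∈ X} =
      insert a (insert b {y ∈ X \ {a, b} | g y ∈ X \ {a, b}}) := by
    ext y
    simp only [mem_filter, mem_insert, mem_sdiff, mem_singleton, Perm.mul_apply, swap_apply_def]
    have := g.injective.eq_iff (a := y) (b := a)
    have := g.injective.eq_iff (a := y) (b := b)
    grind
  rw [pairedWithin, hX, card_insert_of_notMem (by simp [hab]), card_insert_of_notMem (by simp)]
  rfl

lemma pairedWithin_swap_mul_of_notMem {g : Perm α} {X : Finset α} {a b : α} (hga : g a = a)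
    (hgb : g b = b) (hb : b ∉ X) :
    pairedWithin (swap a b * g) X = pairedWithin g (X \ {a}) := by
  unfold pairedWithin
  congr 1
  ext y
  simp only [mem_filter, mem_sdiff, mem_singleton, Perm.mul_apply, swap_apply_def]
  have := g.injective.eq_iff (a := y) (b := a)
  have := g.injective.eq_iff (a := y) (b := b)
  grind

end PairedWithin

section Matchings

variable {α : Type*} [Fintype α] [DecidableEq α]

def matchingsOn (A : Finset α) : Finset (Perm α) :=
  {f | f * f = 1 ∧ f.support = A}

@[simp]
lemma mem_matchingsOn {A : Finset α} {f : Perm α} :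
    f ∈ matchingsOn A ↔ f * f = 1 ∧ f.support = A := by
  simp [matchingsOn]

lemma apply_eq_self_of_mem_matchingsOn {A : Finset α} {g : Perm α} (hg : g ∈ matchingsOn A)
    {y : α} (hy : y ∉ A) : g y = y :=
  Perm.notMem_support.1 <| by rwa [(mem_matchingsOn.1 hg).2]

lemma matchingsOn_empty : matchingsOn (∅ : Finset α) = {1} := by
  ext f
  simp only [mem_matchingsOn, Perm.support_eq_empty_iff, mem_singleton]
  exact ⟨And.right, fun h => ⟨by simp [h], h⟩⟩

lemma matchingsOn_eq_empty_of_card_eq_one {A : Finset α} (hA : #A = 1) :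
    matchingsOn A = ∅ := by
  ext f
  simp only [mem_matchingsOn, notMem_empty, iff_false, not_and]
  rintro - rfl
  exact f.card_support_ne_one hA

lemma swap_mul_mem_matchingsOn_sdiff {A : Finset α} {a b : α} {f : Perm α}
    (hf : f ∈ matchingsOn A) (hab : a ≠ b) (hfa : f a = b) :
    swap a b * f ∈ matchingsOn (A \ {a, b}) := by
  obtain ⟨hff, rfl⟩ := mem_matchingsOn.1 hf
  have hfb : f b = a := by rw [← hfa, ← Perm.mul_apply, hff, Perm.one_apply]
  have hcomm : f * swap a b = swap a b * f := by
    rw [mul_swap_eq_swap_mul, hfa, hfb, swap_comm]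
  refine mem_matchingsOn.2 ⟨?_, ?_⟩
  · rw [mul_assoc, ← mul_assoc f, hcomm, mul_assoc, hff, mul_one, swap_mul_self]
  · ext x
    simp only [Perm.mem_support, Perm.mul_apply, mem_sdiff, mem_insert, mem_singleton,
      swap_apply_def]
    have := f.injective.eq_iff (a := x) (b := a)
    have := f.injective.eq_iff (a := x) (b := b)
    grind

lemma swap_mul_mem_matchingsOn {A : Finset α} {a b : α} {g : Perm α}
    (ha : a ∈ A) (hb : b ∈ A) (hab : a ≠ b) (hg : g ∈ matchingsOn (A \ {a, b})) :
    swap a b * g ∈ matchingsOn A := by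
  obtain ⟨hgg, hsupp⟩ := mem_matchingsOn.1 hg
  have hdisj : (swap a b).Disjoint g := by
    rw [Perm.disjoint_iff_disjoint_support, Perm.support_swap hab, hsupp]
    exact disjoint_sdiff
  refine mem_matchingsOn.2 ⟨?_, ?_⟩
  · rw [mul_assoc, ← mul_assoc g, ← hdisj.commute.eq, mul_assoc, hgg, mul_one, swap_mul_self]
  · rw [hdisj.support_mul, Perm.support_swap hab, hsupp,
      union_sdiff_of_subset (insert_subset ha (singleton_subset_iff.2 hb))]

lemma card_filter_apply_eq_and {A : Finset α} {a b : α} (ha : a ∈ A) (hb : b ∈ A)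
    (hab : a ≠ b) (P : Perm α → Prop) [DecidablePred P] :
    #{f ∈ matchingsOn A | f a = b ∧ P f} =
      #{g ∈ matchingsOn (A \ {a, b}) | P (swap a b * g)} := by
  refine card_nbij' (swap a b * ·) (swap a b * ·) ?_ ?_ ?_ ?_
  · intro f hf
    simp only [coe_filter, Set.mem_ofPred_eq] at hf ⊢
    exact ⟨swap_mul_mem_matchingsOn_sdiff hf.1 hab hf.2.1, by rw [swap_mul_self_mul]; exact hf.2.2⟩
  · intro g hg
    simp only [coe_filter, Set.mem_ofPred_eq] at hg ⊢
    have hga : g a = a := apply_eq_self_of_mem_matchingsOn hg.1 (by simp)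
    exact ⟨swap_mul_mem_matchingsOn ha hb hab hg.1, by simp [hga], hg.2⟩
  · intro f _; exact swap_mul_self_mul a b f
  · intro g _; exact swap_mul_self_mul a b g

lemma card_filter_matchingsOn_eq_sum {A : Finset α} {a : α} (ha : a ∈ A)
    (P : Perm α → Prop) [DecidablePred P] :
    #{f ∈ matchingsOn A | P f} =
      ∑ b ∈ A.erase a, #{g ∈ matchingsOn (A \ {a, b}) | P (swap a b * g)} := by
  rw [card_eq_sum_card_fiberwise (f := fun f : Perm α => f a) (t := A.erase a)]
  · refine sum_congr rfl fun b hb => ?_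
    rw [filter_filter,
      ← card_filter_apply_eq_and ha (mem_of_mem_erase hb) (ne_of_mem_erase hb).symm]
    exact congrArg card (filter_congr fun f _ => and_comm)
  · intro f hf
    obtain ⟨-, rfl⟩ := mem_matchingsOn.1 (mem_filter.1 hf).1
    exact mem_erase.2 ⟨Perm.mem_support.1 ha, Perm.apply_mem_support.2 ha⟩

def matchingCount : ℕ → ℕ
  | 0 => 1
  | 1 => 0
  | n + 2 => (n + 1) * matchingCount n

theorem card_matchingsOn (A : Finset α) : #(matchingsOn A) = matchingCount #A := by
  suffices ∀ n (A : Finset α), #A = n → #(matchingsOn A) = matchingCount n from this _ A rfl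
  intro n
  induction n using matchingCount.induct with
  | case1 => intro A hA; simp [card_eq_zero.1 hA, matchingsOn_empty, matchingCount]
  | case2 => intro A hA; simp [matchingsOn_eq_empty_of_card_eq_one hA, matchingCount]
  | case3 n ih =>
    intro A hA
    obtain ⟨a, ha⟩ := card_pos.1 (by omega : 0 < #A)
    have hpair : ∀ b ∈ A.erase a, #(matchingsOn (A \ {a, b})) = matchingCount n := fun b hb =>
      ih _ <| by rw [card_sdiff_pair ha (mem_of_mem_erase hb) (ne_of_mem_erase hb).symm, hA]; rfl
    have hsum := card_filter_matchingsOn_eq_sum ha (fun _ => True)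
    simp only [filter_true] at hsum
    rw [hsum, sum_congr rfl hpair, sum_const, card_erase_of_mem ha, hA, smul_eq_mul]
    rfl

lemma card_filter_pairedWithin_le_eq_sum {A X : Finset α} (hXA : X ⊆ A) {a : α} (ha : a ∈ X)
    (x : ℕ) :
    #{f ∈ matchingsOn A | x ≤ pairedWithin f X} =
      ∑ b ∈ X.erase a, #{g ∈ matchingsOn (A \ {a, b}) | x - 2 ≤ pairedWithin g (X \ {a, b})} +
      ∑ b ∈ A \ X, #{g ∈ matchingsOn (A \ {a, b}) | x ≤ pairedWithin g (X \ {a})} := by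
  have hsplit : A.erase a = X.erase a ∪ A \ X := by
    ext y; simp only [mem_erase, mem_union, mem_sdiff]; grind
  have hdisj : Disjoint (X.erase a) (A \ X) :=
    disjoint_left.2 fun y hy hy' => (mem_sdiff.1 hy').2 (mem_of_mem_erase hy)
  rw [card_filter_matchingsOn_eq_sum (hXA ha), hsplit, sum_union hdisj]
  congr 1 <;> refine sum_congr rfl fun b hb => congrArg card (filter_congr fun g hg => ?_)
  all_goals
    have hga := apply_eq_self_of_mem_matchingsOn hg (y := a) (by simp)
    have hgb := apply_eq_self_of_mem_matchingsOn hg (y := b) (by simp)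
  · rw [pairedWithin_swap_mul_of_mem hga hgb (ne_of_mem_erase hb).symm ha (mem_of_mem_erase hb)]
    omega
  · rw [pairedWithin_swap_mul_of_notMem hga hgb (mem_sdiff.1 hb).2]

end Matchings

section BinomialTail

variable {p : ℝ}

lemma binomialTail_nonneg (hp0 : 0 ≤ p) (hp1 : p ≤ 1) (n x : ℕ) : 0 ≤ binomialTail n p x :=
  sum_nonneg fun _ _ => by
    have : 0 ≤ 1 - p := by linarith
    positivity

lemma binomialTail_zero_right (n : ℕ) : binomialTail n p 0 = 1 := by
  have h := add_pow p (1 - p) n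
  rw [add_sub_cancel, one_pow] at h
  rw [binomialTail, ← Nat.range_succ_eq_Icc_zero]
  exact (sum_congr rfl fun k _ => by ring).trans h.symm

lemma binomialTail_antitone (hp0 : 0 ≤ p) (hp1 : p ≤ 1) (n : ℕ) :
    Antitone (binomialTail n p) := fun _ _ hxy =>
  sum_le_sum_of_subset_of_nonneg (Icc_subset_Icc_left hxy) fun _ _ _ => by
    have : 0 ≤ 1 - p := by linarith
    positivity

lemma binomialTail_succ_succ (n y : ℕ) :
    binomialTail (n + 1) p (y + 1) =
      p * binomialTail n p y + (1 - p) * binomialTail n p (y + 1) := by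
  have hterm : ∀ k, ((n + 1).choose (k + 1) : ℝ) * p ^ (k + 1) * (1 - p) ^ (n + 1 - (k + 1)) =
      p * ((n.choose k : ℝ) * p ^ k * (1 - p) ^ (n - k)) +
        (n.choose (k + 1) : ℝ) * p ^ (k + 1) * (1 - p) ^ (n + 1 - (k + 1)) := fun k => by
    rw [Nat.choose_succ_succ', Nat.add_sub_add_right]
    push_cast
    ring
  have hlast :
      ∑ k ∈ Icc y n, (n.choose (k + 1) : ℝ) * p ^ (k + 1) * (1 - p) ^ (n + 1 - (k + 1)) =
        (1 - p) * binomialTail n p (y + 1) := by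
    rw [← sum_image (f := fun k => (n.choose k : ℝ) * p ^ k * (1 - p) ^ (n + 1 - k))
      (fun _ _ _ _ => Nat.add_right_cancel), image_add_right_Icc,
      binomialTail, mul_sum, ← sum_subset (Icc_subset_Icc_right n.le_succ)]
    · refine sum_congr rfl fun k hk => ?_
      rw [show n + 1 - k = n - k + 1 by grind]
      ring
    · intro k hk hkn
      rw [Nat.choose_eq_zero_of_lt (by grind), Nat.cast_zero, zero_mul, zero_mul]
  rw [binomialTail, ← image_add_right_Icc, sum_image (fun _ _ _ _ => Nat.add_right_cancel),
    sum_congr rfl fun k _ => hterm k, sum_add_distrib, ← mul_sum, hlast]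
  rfl

lemma binomialTail_succ (n x : ℕ) :
    binomialTail (n + 1) p x = p * binomialTail n p (x - 1) + (1 - p) * binomialTail n p x := by
  cases x with
  | zero => simp only [Nat.zero_sub, binomialTail_zero_right]; ring
  | succ y => exact binomialTail_succ_succ n y

lemma binomialTail_le_binomialTail_succ (hp0 : 0 ≤ p) (hp1 : p ≤ 1) (n x : ℕ) :
    binomialTail n p x ≤ binomialTail (n + 1) p x := by
  have := binomialTail_antitone hp0 hp1 n (Nat.sub_le x 1)
  rw [binomialTail_succ]
  nlinarith

lemma binomialTail_succ_le (hp0 : 0 ≤ p) (hp1 : p ≤ 1) (n x : ℕ) :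
    binomialTail (n + 1) p x ≤ binomialTail n p (x - 1) := by
  have := binomialTail_antitone hp0 hp1 n (Nat.sub_le x 1)
  rw [binomialTail_succ]
  nlinarith

lemma binomialTail_mixture_le (hp0 : 0 ≤ p) (hp1 : p ≤ 1) {N : ℝ} (hN : 0 ≤ N) (j : ℕ)
    (hj : j ≤ p ^ 2 * N) (x : ℕ) :
    j * binomialTail (j - 1) p (x - 2) + (N - j) * binomialTail j p x ≤
      N * binomialTail (j + 1) p x := by
  cases j with
  | zero =>
    simpa using mul_le_mul_of_nonneg_left (binomialTail_le_binomialTail_succ hp0 hp1 0 x) hN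
  | succ i =>
    have hpascal := binomialTail_succ (p := p) i (x - 1)
    rw [show x - 1 - 1 = x - 2 by omega] at hpascal
    rw [Nat.add_sub_cancel, binomialTail_succ (i + 1) x, hpascal]
    have h1 : 0 ≤ (p ^ 2 * N - (i + 1 : ℕ)) *
        (binomialTail i p (x - 2) - binomialTail (i + 1) p x) := by
      have := binomialTail_antitone hp0 hp1 i (show x - 2 ≤ x - 1 by omega)
      have := binomialTail_succ_le hp0 hp1 i x
      apply mul_nonneg <;> linarith
    have h2 : 0 ≤ N * p * (1 - p) * (binomialTail i p (x - 1) - binomialTail (i + 1) p x) := by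
      have := binomialTail_succ_le hp0 hp1 i x
      have : 0 ≤ 1 - p := by linarith
      apply mul_nonneg (by positivity)
      linarith
    linear_combination h1 + h2

end BinomialTail

section Domination

variable {α : Type*} [Fintype α] [DecidableEq α] {p : ℝ}

lemma card_filter_pairedWithin_empty_le (hp0 : 0 ≤ p) (hp1 : p ≤ 1) (A : Finset α) (x : ℕ) :
    (#{f ∈ matchingsOn A | x ≤ pairedWithin f ∅} : ℝ) ≤
      binomialTail #(∅ : Finset α) p x * #(matchingsOn A) := by
  rcases Nat.eq_zero_or_pos x with rfl | hx
  · simp [binomialTail_zero_right]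
  · rw [filter_false_of_mem fun f _ => by simp [pairedWithin]; omega, card_empty, Nat.cast_zero]
    exact mul_nonneg (binomialTail_nonneg hp0 hp1 _ _) (Nat.cast_nonneg _)

lemma card_filter_pairedWithin_le_of_sdiff_pair (hp0 : 0 ≤ p) (hp1 : p ≤ 1) {A X : Finset α}
    (hXA : X ⊆ A) {a : α} (ha : a ∈ X) {n j : ℕ} (hA : #A = n + 2) (hj : #X = j + 1)
    (hjn : (j : ℝ) ≤ p ^ 2 * (n + 1))
    (hrec : ∀ b ∈ A.erase a, ∀ Y ⊆ A \ {a, b}, #Y ≤ j → ∀ y,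
      (#{g ∈ matchingsOn (A \ {a, b}) | y ≤ pairedWithin g Y} : ℝ) ≤
        binomialTail #Y p y * matchingCount n) (x : ℕ) :
    (#{f ∈ matchingsOn A | x ≤ pairedWithin f X} : ℝ) ≤
      binomialTail (j + 1) p x * matchingCount (n + 2) := by
  have hin : ∀ b ∈ X.erase a,
      (#{g ∈ matchingsOn (A \ {a, b}) | x - 2 ≤ pairedWithin g (X \ {a, b})} : ℝ) ≤
        binomialTail (j - 1) p (x - 2) * matchingCount n := fun b hb => by
    have hab := (ne_of_mem_erase hb).symm
    have hcard : #(X \ {a, b}) = j - 1 := by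
      rw [card_sdiff_pair ha (mem_of_mem_erase hb) hab, hj]; rfl
    simpa only [hcard] using hrec b (mem_erase_of_ne_of_mem hab.symm (hXA (mem_of_mem_erase hb)))
      _ (sdiff_subset_sdiff hXA subset_rfl) (by omega) (x - 2)
  have hout : ∀ b ∈ A \ X,
      (#{g ∈ matchingsOn (A \ {a, b}) | x ≤ pairedWithin g (X \ {a})} : ℝ) ≤
        binomialTail j p x * matchingCount n := fun b hb => by
    obtain ⟨hbA, hbX⟩ := mem_sdiff.1 hb
    have hcard : #(X \ {a}) = j := by
      rw [card_sdiff_of_subset (singleton_subset_iff.2 ha), hj]; rfl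
    have hsub : X \ {a} ⊆ A \ {a, b} := fun y hy => by
      simp only [mem_sdiff, mem_insert, mem_singleton] at hy ⊢
      exact ⟨hXA hy.1, by rintro (rfl | rfl) <;> tauto⟩
    simpa only [hcard] using
      hrec b (mem_erase_of_ne_of_mem (ne_of_mem_of_not_mem ha hbX).symm hbA) _ hsub hcard.le x
  have hXa : #(X.erase a) = j := by rw [card_erase_of_mem ha, hj]; rfl
  have hAX : (#(A \ X) : ℝ) = n + 1 - j := by
    rw [card_sdiff_of_subset hXA, Nat.cast_sub (card_le_card hXA), hA, hj]; push_cast; ring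
  rw [card_filter_pairedWithin_le_eq_sum hXA ha,
    show matchingCount (n + 2) = (n + 1) * matchingCount n from rfl]
  push_cast
  calc _ ≤ #(X.erase a) • (binomialTail (j - 1) p (x - 2) * matchingCount n) +
        #(A \ X) • (binomialTail j p x * matchingCount n) :=
        add_le_add (sum_le_card_nsmul _ _ _ hin) (sum_le_card_nsmul _ _ _ hout)
    _ = (j * binomialTail (j - 1) p (x - 2) + (n + 1 - j) * binomialTail j p x) *
        matchingCount n := by rw [nsmul_eq_mul, nsmul_eq_mul, hXa, hAX]; ring
    _ ≤ ((n + 1) * binomialTail (j + 1) p x) * matchingCount n :=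
        mul_le_mul_of_nonneg_right (binomialTail_mixture_le hp0 hp1 (by positivity) j hjn x)
          (Nat.cast_nonneg _)
    _ = _ := by ring

theorem card_filter_pairedWithin_le_le (hp0 : 0 ≤ p) (hp2 : p ^ 2 ≤ 1 / 2) {A X : Finset α}
    (hXA : X ⊆ A) (hX : (#X : ℝ) - 1 ≤ p ^ 2 * (#A - 1)) (x : ℕ) :
    (#{f ∈ matchingsOn A | x ≤ pairedWithin f X} : ℝ) ≤
      binomialTail #X p x * #(matchingsOn A) := by
  have hp1 : p ≤ 1 := by nlinarith
  induction hA : #A using Nat.strong_induction_on generalizing A X x with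
  | _ n ih =>
  rcases X.eq_empty_or_nonempty with rfl | ⟨a, ha⟩
  · exact card_filter_pairedWithin_empty_le hp0 hp1 A x
  obtain ⟨j, hj⟩ : ∃ j, #X = j + 1 := ⟨#X - 1, by have := card_pos.2 ⟨a, ha⟩; omega⟩
  rcases n with _ | _ | n
  · exact absurd hA (card_ne_zero_of_mem (hXA ha))
  · simp [matchingsOn_eq_empty_of_card_eq_one hA]
  rw [card_matchingsOn, hA, hj]
  refine card_filter_pairedWithin_le_of_sdiff_pair hp0 hp1 hXA ha hA hj
    (by push_cast [hj, hA] at hX; linarith) (fun b hb Y hY hYj y => ?_) x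
  have hpair : #(A \ {a, b}) = n := by
    rw [card_sdiff_pair (hXA ha) (mem_of_mem_erase hb) (ne_of_mem_erase hb).symm, hA]; rfl
  rw [← hpair, ← card_matchingsOn]
  refine ih n (by omega) hY ?_ y hpair
  have : (#Y : ℝ) ≤ j := by exact_mod_cast hYj
  push_cast [hpair, hj, hA] at hX ⊢
  nlinarith

end Domination

lemma perfectMatchings_eq_matchingsOn_univ (m : ℕ) :
    perfectMatchings m = matchingsOn univ := by
  ext f
  simp [perfectMatchings, Perm.ext_iff, eq_univ_iff_forall, forall_and]

lemma sq_sqrt_div_le_half {k m : ℕ} (hk : 2 * k ≤ m) : Real.sqrt ((k : ℝ) / m) ^ 2 ≤ 1 / 2 := by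
  have hkm : (2 * k : ℝ) ≤ m := by exact_mod_cast hk
  rw [Real.sq_sqrt (by positivity)]
  rcases (Nat.cast_nonneg (α := ℝ) m).eq_or_lt with hm | hm
  · rw [← hm, div_zero]; norm_num
  · rw [div_le_iff₀ hm]; linarith

lemma sub_one_le_sq_sqrt_div_mul {k m : ℕ} (hk : 2 * k ≤ m) :
    (k : ℝ) - 1 ≤ Real.sqrt ((k : ℝ) / m) ^ 2 * (m - 1) := by
  have hkm : (2 * k : ℝ) ≤ m := by exact_mod_cast hk
  have hm : Real.sqrt ((k : ℝ) / m) ^ 2 * m = k := by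
    rw [Real.sq_sqrt (by positivity), div_mul_cancel_of_imp fun hm => by linarith]
  rw [mul_sub, hm]
  linarith [sq_sqrt_div_le_half hk]

theorem matching_self_intersection_dominated_by_binomial_general
    (m k : ℕ) (X : Finset (Fin m)) (hX : X.card = k) (hk : 2 * k ≤ m) :
    ∀ x : ℕ,
      (((perfectMatchings m).filter
          (fun f : Equiv.Perm (Fin m) => x ≤ (X ∩ X.image ⇑f).card)).card : ℝ) /
        ((perfectMatchings m).card : ℝ) ≤
      binomialTail k (Real.sqrt ((k : ℝ) / m)) x := by
  intro x
  have hp0 := Real.sqrt_nonneg ((k : ℝ) / m)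
  have hp2 := sq_sqrt_div_le_half hk
  have hbound := card_filter_pairedWithin_le_le hp0 hp2 (subset_univ X)
    (by rw [card_univ, Fintype.card_fin, hX]; exact sub_one_le_sq_sqrt_div_mul hk) x
  rw [← perfectMatchings_eq_matchingsOn_univ, hX] at hbound
  have hpaired : ∀ f ∈ perfectMatchings m, #(X ∩ X.image f) = pairedWithin f X := fun f hf =>
    card_inter_image_eq_pairedWithin
      (mem_matchingsOn.1 (perfectMatchings_eq_matchingsOn_univ m ▸ hf)).1 X
  rw [filter_congr fun f hf => by rw [hpaired f hf]]
  exact div_le_of_le_mul₀ (Nat.cast_nonneg _) (binomialTail_nonneg hp0 (by nlinarith) _ _) hbound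

/-- For a uniformly random perfect matching `F` of a set of `m` points and a subset `X`
of size `k ≤ m/2`, the number `|X ∩ F(X)|` of points of `X` matched within `X` is
stochastically dominated by `Bin(k, √(k/m))`. -/
theorem matching_self_intersection_dominated_by_binomial
    (m k : ℕ) (hm : Even m) (X : Finset (Fin m)) (hX : X.card = k) (hk : 2 * k ≤ m) :
    ∀ x : ℕ,
      (((perfectMatchings m).filter
          (fun f : Equiv.Perm (Fin m) => x ≤ (X ∩ X.image ⇑f).card)).card : ℝ) /
        ((perfectMatchings m).card : ℝ) ≤
      binomialTail k (Real.sqrt ((k : ℝ) / m)) x :=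
  matching_self_intersection_dominated_by_binomial_general m k X hX hk
end

section
/- Let $z \ge 1$ be an integer, $b > 0$, $\rho > 0$, and let $T^* = \sum_{i=1}^{z} E_i$ where $E_i$ are independent exponential random variables with rates $b + \rho i$ respectively. Then for every $t \ge 0$, $\mathbb{P}(T^* \le t) \le \prod_{i=1}^{z}\left(1 + \frac{b}{\rho i}\right) \cdot \rho z \int_0^t e^{-(\rho + b)y}\left(1 - e^{-\rho y}\right)^{z-1} dy$. -/
open MeasureTheory ProbabilityTheory Finset

noncomputable def gg (b ρ : ℝ) (m : ℕ) (y : ℝ) : ℝ :=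
  Real.exp (-(ρ + b) * y) * (1 - Real.exp (-ρ * y)) ^ m

noncomputable def JJ (b ρ : ℝ) (m : ℕ) (t : ℝ) : ℝ := ∫ y in (0:ℝ)..t, gg b ρ m y

lemma gg_cont (b ρ : ℝ) (m : ℕ) : Continuous (gg b ρ m) := by
  unfold gg; fun_prop

lemma expE_hasDerivAt (c y : ℝ) : HasDerivAt (fun y : ℝ => Real.exp (c * y))
    (c * Real.exp (c * y)) y := by
  have := (((hasDerivAt_id y).const_mul c).exp)
  simpa [mul_comm] using this

lemma psi_hasDerivAt (b ρ : ℝ) (m : ℕ) (y : ℝ) :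
    HasDerivAt (fun y => -(Real.exp (-(ρ + b) * y) * (1 - Real.exp (-ρ * y)) ^ (m + 1)))
      ((b + ρ * (m + 2)) * gg b ρ (m + 1) y - ρ * (m + 1) * gg b ρ m y) y := by
  have h1 : HasDerivAt (fun y : ℝ => Real.exp (-(ρ + b) * y))
      (-(ρ + b) * Real.exp (-(ρ + b) * y)) y := expE_hasDerivAt _ y
  have h2 : HasDerivAt (fun y : ℝ => (1 - Real.exp (-ρ * y)) ^ (m + 1))
      ((m + 1 : ℕ) * (1 - Real.exp (-ρ * y)) ^ m * (ρ * Real.exp (-ρ * y))) y := by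
    have hin : HasDerivAt (fun y : ℝ => 1 - Real.exp (-ρ * y)) (ρ * Real.exp (-ρ * y)) y := by
      have := (expE_hasDerivAt (-ρ) y).const_sub 1
      simpa using this
    simpa using hin.fun_pow (m + 1)
  have := ((h1.mul h2).neg)
  refine this.congr_deriv ?_
  unfold gg
  push_cast
  rw [pow_succ]
  ring

lemma star (b ρ : ℝ) (hb : 0 < b) (hρ : 0 < ρ) (m : ℕ) (t : ℝ) :
    (b + ρ * (m + 2)) * JJ b ρ (m + 1) t
      = ρ * (m + 1) * JJ b ρ m t - Real.exp (-(ρ + b) * t) * (1 - Real.exp (-ρ * t)) ^ (m + 1) := by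
  have hint : ∀ k : ℕ, IntervalIntegrable (gg b ρ k) volume 0 t :=
    fun k => (gg_cont b ρ k).intervalIntegrable _ _
  have hftc := intervalIntegral.integral_eq_sub_of_hasDerivAt (a := 0) (b := t)
    (f := fun y => -(Real.exp (-(ρ + b) * y) * (1 - Real.exp (-ρ * y)) ^ (m + 1)))
    (fun y _ => psi_hasDerivAt b ρ m y)
    (((continuous_const.mul (gg_cont b ρ (m+1))).sub
      (continuous_const.mul (gg_cont b ρ m))).intervalIntegrable _ _)
  rw [intervalIntegral.integral_sub ((hint (m+1)).const_mul _) ((hint m).const_mul _),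
    intervalIntegral.integral_const_mul, intervalIntegral.integral_const_mul] at hftc
  simp only [mul_zero, neg_zero, Real.exp_zero, one_mul, sub_self] at hftc
  rw [zero_pow (Nat.succ_ne_zero m)] at hftc
  unfold JJ
  linarith [hftc]

lemma convpart (b ρ : ℝ) (hρ : 0 < ρ) (m : ℕ) (t : ℝ) :
    ∫ y in (0:ℝ)..t, Real.exp (-((b + ρ * (m + 2)) * (t - y))) * gg b ρ m y
      = Real.exp (-(ρ + b) * t) * (1 - Real.exp (-ρ * t)) ^ (m + 1) / (ρ * (m + 1)) := by
  have key : ∀ y : ℝ, Real.exp (ρ * y) - 1 = Real.exp (ρ * y) * (1 - Real.exp (-ρ * y)) := by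
    intro y
    rw [mul_sub, mul_one, ← Real.exp_add]
    simp
  have hm1 : (ρ * ((m : ℝ) + 1)) ≠ 0 := by positivity
  have hderiv : ∀ y : ℝ, HasDerivAt (fun y => (Real.exp (ρ * y) - 1) ^ (m + 1) / (ρ * (m + 1)))
      (Real.exp (ρ * y) * (Real.exp (ρ * y) - 1) ^ m) y := by
    intro y
    have hin : HasDerivAt (fun y : ℝ => Real.exp (ρ * y) - 1) (ρ * Real.exp (ρ * y)) y := by
      simpa using (expE_hasDerivAt ρ y).sub_const 1
    have := (hin.pow (m + 1)).div_const (ρ * (m + 1))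
    refine this.congr_deriv ?_
    push_cast
    field_simp
  have hftc := intervalIntegral.integral_eq_sub_of_hasDerivAt (a := 0) (b := t)
    (fun y _ => hderiv y)
    ((by fun_prop : Continuous fun y : ℝ =>
      Real.exp (ρ * y) * (Real.exp (ρ * y) - 1) ^ m).intervalIntegrable _ _)
  have hpt : ∀ y : ℝ, Real.exp (-((b + ρ * (m + 2)) * (t - y))) * gg b ρ m y
      = Real.exp (-((b + ρ * (m + 2)) * t))
        * (Real.exp (ρ * y) * (Real.exp (ρ * y) - 1) ^ m) := by
    intro y
    have h2 : Real.exp (-((b + ρ * (m + 2)) * (t - y))) * Real.exp (-(ρ + b) * y)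
        = Real.exp (-((b + ρ * (m + 2)) * t))
          * (Real.exp (ρ * y) * Real.exp ((m : ℝ) * (ρ * y))) := by
      rw [← Real.exp_add, ← Real.exp_add, ← Real.exp_add, Real.exp_eq_exp]
      ring
    rw [key y, mul_pow, ← Real.exp_nat_mul]
    unfold gg
    push_cast
    linear_combination ((1 - Real.exp (-ρ * y)) ^ m) * h2
  rw [intervalIntegral.integral_congr (fun y _ => hpt y), intervalIntegral.integral_const_mul,
    hftc]
  have h0 : (Real.exp (ρ * 0) - 1) ^ (m + 1) = 0 := by norm_num
  rw [h0, zero_div, sub_zero, key t, mul_pow]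
  have h3 : Real.exp (-((b + ρ * ((m : ℝ) + 2)) * t)) * (Real.exp (ρ * t)) ^ (m + 1)
      = Real.exp (-(ρ + b) * t) := by
    rw [← Real.exp_nat_mul, ← Real.exp_add, Real.exp_eq_exp]
    push_cast
    ring
  linear_combination ((1 - Real.exp (-ρ * t)) ^ (m + 1) / (ρ * ((m : ℝ) + 1))) * h3

lemma gg_nonneg (b ρ : ℝ) (hρ : 0 < ρ) (m : ℕ) {y : ℝ} (hy : 0 ≤ y) : 0 ≤ gg b ρ m y := by
  unfold gg
  have h1 : 0 ≤ 1 - Real.exp (-ρ * y) := by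
    have : Real.exp (-ρ * y) ≤ 1 := by
      rw [Real.exp_le_one_iff]; nlinarith
    linarith
  positivity

lemma JJ_hasDerivAt (b ρ : ℝ) (m : ℕ) (t : ℝ) : HasDerivAt (JJ b ρ m) (gg b ρ m t) t := by
  refine intervalIntegral.integral_hasDerivAt_right ((gg_cont b ρ m).intervalIntegrable _ _)
    ((gg_cont b ρ m).stronglyMeasurable.stronglyMeasurableAtFilter) (gg_cont b ρ m).continuousAt

lemma JJ_cont (b ρ : ℝ) (m : ℕ) : Continuous (JJ b ρ m) :=
  continuous_iff_continuousAt.2 fun t => (JJ_hasDerivAt b ρ m t).differentiableAt.continuousAt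

lemma JJ_nonneg (b ρ : ℝ) (hρ : 0 < ρ) (m : ℕ) {t : ℝ} (ht : 0 ≤ t) : 0 ≤ JJ b ρ m t := by
  refine intervalIntegral.integral_nonneg ht fun y hy => gg_nonneg b ρ hρ m hy.1

noncomputable def KK (b ρ : ℝ) (z : ℕ) : ℝ :=
  (∏ i ∈ Finset.Icc 1 z, (1 + b / (ρ * i))) * (ρ * z)

noncomputable def FF (b ρ : ℝ) (z : ℕ) (t : ℝ) : ℝ := KK b ρ z * JJ b ρ (z - 1) t

lemma KK_succ (b ρ : ℝ) (hb : 0 < b) (hρ : 0 < ρ) (m : ℕ) :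
    KK b ρ (m + 2) = KK b ρ (m + 1) * ((b + ρ * (m + 2)) / (ρ * (m + 1))) := by
  unfold KK
  rw [Finset.prod_Icc_succ_top (by omega : 1 ≤ m + 2)]
  have h1 : (ρ * ((m : ℝ) + 1)) ≠ 0 := by positivity
  have h2 : (ρ * (((m : ℕ) + 2 : ℕ) : ℝ)) ≠ 0 := by positivity
  push_cast at h2 ⊢
  field_simp
  ring

lemma FF_cont (b ρ : ℝ) (z : ℕ) : Continuous (FF b ρ z) := continuous_const.mul (JJ_cont b ρ (z-1))

lemma FF_nonneg (b ρ : ℝ) (hb : 0 < b) (hρ : 0 < ρ) (z : ℕ) {t : ℝ} (ht : 0 ≤ t) :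
    0 ≤ FF b ρ z t := by
  have h1 : 0 ≤ KK b ρ z := by
    unfold KK
    apply mul_nonneg _ (by positivity)
    apply Finset.prod_nonneg
    intro i hi
    have : (0:ℝ) < i := by
      have := (Finset.mem_Icc.1 hi).1
      exact_mod_cast Nat.lt_of_lt_of_le Nat.zero_lt_one this
    positivity
  exact mul_nonneg h1 (JJ_nonneg b ρ hρ _ ht)

lemma step_integral (b ρ : ℝ) (hb : 0 < b) (hρ : 0 < ρ) (m : ℕ) (t : ℝ) (ht : 0 ≤ t) :
    ∫ a in (0:ℝ)..t, ((b + ρ * (m + 2)) * Real.exp (-((b + ρ * (m + 2)) * a)))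
        * FF b ρ (m + 1) (t - a)
      = FF b ρ (m + 2) t := by
  set L : ℝ := b + ρ * (m + 2) with hL
  have hm1 : (ρ * ((m : ℝ) + 1)) ≠ 0 := by positivity
  -- reverse the variable
  have h1 : ∀ a : ℝ, (L * Real.exp (-(L * a))) * FF b ρ (m + 1) (t - a)
      = (fun y => L * Real.exp (-(L * (t - y))) * FF b ρ (m + 1) y) (t - a) := by
    intro a
    have h : t - (t - a) = a := by ring
    simp only [h]
  rw [intervalIntegral.integral_congr (fun a _ => h1 a),
    intervalIntegral.integral_comp_sub_left (fun y => L * Real.exp (-(L * (t - y)))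
      * FF b ρ (m + 1) y) t, sub_self, sub_zero]
  -- integration by parts
  have hFFd : ∀ y : ℝ, HasDerivAt (FF b ρ (m + 1)) (KK b ρ (m + 1) * gg b ρ m y) y := by
    intro y
    have := (JJ_hasDerivAt b ρ m y).const_mul (KK b ρ (m + 1))
    exact this
  have hvd : ∀ y : ℝ, HasDerivAt (fun y => Real.exp (-(L * (t - y))))
      (L * Real.exp (-(L * (t - y)))) y := by
    intro y
    have hin : HasDerivAt (fun y : ℝ => -(L * (t - y))) L y := by
      have := (((hasDerivAt_id y).const_sub t).const_mul L).neg
      exact this.congr_deriv (by ring)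
    simpa [mul_comm] using hin.exp
  have hparts := intervalIntegral.integral_mul_deriv_eq_deriv_mul
    (u := FF b ρ (m + 1)) (v := fun y => Real.exp (-(L * (t - y))))
    (u' := fun y => KK b ρ (m + 1) * gg b ρ m y)
    (v' := fun y => L * Real.exp (-(L * (t - y))))
    (fun y _ => hFFd y) (fun y _ => hvd y)
    ((continuous_const.mul (gg_cont b ρ m)).intervalIntegrable 0 t)
    ((by fun_prop : Continuous fun y : ℝ => L * Real.exp (-(L * (t - y)))).intervalIntegrable 0 t)
  have hswap : ∀ y : ℝ, L * Real.exp (-(L * (t - y))) * FF b ρ (m + 1) y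
      = FF b ρ (m + 1) y * (L * Real.exp (-(L * (t - y)))) := fun y => by ring
  rw [intervalIntegral.integral_congr (fun y _ => hswap y), hparts]
  -- simplify the boundary terms
  have hswap2 : ∀ y : ℝ, KK b ρ (m + 1) * gg b ρ m y * Real.exp (-(L * (t - y)))
      = KK b ρ (m + 1) * (Real.exp (-(L * (t - y))) * gg b ρ m y) := fun y => by ring
  rw [intervalIntegral.integral_congr (fun y _ => hswap2 y),
    intervalIntegral.integral_const_mul, hL, convpart b ρ hρ m t]
  have hJ0 : FF b ρ (m + 1) 0 = 0 := by
    simp [FF, JJ, intervalIntegral.integral_same]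
  rw [hJ0]
  have hst := star b ρ hb hρ m t
  have hFF1 : FF b ρ (m + 1) t = KK b ρ (m + 1) * JJ b ρ m t := by simp [FF]
  have hFF2 : FF b ρ (m + 2) t = KK b ρ (m + 1) * ((b + ρ * (m + 2)) / (ρ * (m + 1)))
      * JJ b ρ (m + 1) t := by
    rw [FF, show (m + 2) - 1 = m + 1 from rfl, KK_succ b ρ hb hρ m]
  rw [hFF1, hFF2]
  simp only [sub_self, mul_zero, neg_zero, Real.exp_zero, mul_one, zero_mul, sub_zero]
  field_simp
  rw [show -((ρ + b) * t) = -(ρ + b) * t from by ring,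
    show -(ρ * t) = -ρ * t from by ring]
  linear_combination (-(KK b ρ (m + 1))) * hst

lemma expMeasure_eq_withDensity (r : ℝ) :
    expMeasure r = volume.withDensity (exponentialPDF r) := rfl

lemma expMeasure_Iio_zero (r : ℝ) : expMeasure r (Set.Iio 0) = 0 := by
  rw [expMeasure_eq_withDensity, withDensity_apply _ measurableSet_Iio]
  exact lintegral_exponentialPDF_of_nonpos le_rfl

lemma expMeasure_Iic (r t : ℝ) (hr : 0 < r) (ht : 0 ≤ t) :
    expMeasure r (Set.Iic t) = ENNReal.ofReal (1 - Real.exp (-(r * t))) := by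
  rw [expMeasure_eq_withDensity, withDensity_apply _ measurableSet_Iic,
    lintegral_exponentialPDF_eq_antiDeriv hr t, if_pos ht]

lemma meas_neg (b ρ : ℝ) (hb : 0 < b) (hρ : 0 < ρ) (n : ℕ) (t : ℝ) (ht : t < 0) :
    (Measure.pi fun i : Fin (n+1) => expMeasure (b + ρ * ((i : ℕ) + 1)))
      {y | ∑ i, y i ≤ t} = 0 := by
  haveI : ∀ i : Fin (n+1), SigmaFinite (expMeasure (b + ρ * ((i : ℕ) + 1))) := fun i => by
    haveI := isProbabilityMeasure_expMeasure
      (show (0:ℝ) < b + ρ * ((i : ℕ) + 1) by positivity)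
    infer_instance
  apply measure_mono_null (t := ⋃ i : Fin (n+1), (fun y : Fin (n+1) → ℝ => y i) ⁻¹' Set.Iio 0)
  · intro y hy
    simp only [Set.mem_setOf_eq] at hy
    have : ∃ i : Fin (n+1), y i < 0 := by
      by_contra h
      push_neg at h
      have : (0:ℝ) ≤ ∑ i, y i := Finset.sum_nonneg fun i _ => h i
      linarith
    obtain ⟨i, hi⟩ := this
    exact Set.mem_iUnion.2 ⟨i, hi⟩
  · exact measure_iUnion_null fun i =>
      Measure.pi_eval_preimage_null _ (expMeasure_Iio_zero _)

lemma JJ_zero_eval (b ρ : ℝ) (hb : 0 < b) (hρ : 0 < ρ) (t : ℝ) :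
    JJ b ρ 0 t = (1 - Real.exp (-(ρ + b) * t)) / (ρ + b) := by
  have hd : ∀ y : ℝ, HasDerivAt (fun y => -Real.exp (-(ρ + b) * y) / (ρ + b))
      (gg b ρ 0 y) y := by
    intro y
    have := ((expE_hasDerivAt (-(ρ + b)) y).neg).div_const (ρ + b)
    refine this.congr_deriv ?_
    unfold gg
    have h1 : (ρ + b) ≠ 0 := by positivity
    field_simp
  have hftc := intervalIntegral.integral_eq_sub_of_hasDerivAt (a := 0) (b := t)
    (fun y _ => hd y) ((gg_cont b ρ 0).intervalIntegrable _ _)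
  rw [JJ, hftc]
  simp only [mul_zero, neg_zero, Real.exp_zero]
  ring

lemma base_case (b ρ : ℝ) (hb : 0 < b) (hρ : 0 < ρ) (t : ℝ) (ht : 0 ≤ t) :
    (Measure.pi fun i : Fin 1 => expMeasure (b + ρ * ((i : ℕ) + 1)))
      {y | ∑ i, y i ≤ t} = ENNReal.ofReal (FF b ρ 1 t) := by
  have hfam : (fun i : Fin 1 => expMeasure (b + ρ * ((i : ℕ) + 1)))
      = fun _ : Fin 1 => expMeasure (b + ρ) := by
    funext i
    congr 1
    have h0 : ((i : ℕ) : ℝ) = 0 := by simp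
    rw [h0]; ring
  rw [hfam]
  haveI : IsProbabilityMeasure (expMeasure (b + ρ)) :=
    isProbabilityMeasure_expMeasure (by positivity)
  have hset : {y : Fin 1 → ℝ | ∑ i, y i ≤ t}
      = (MeasurableEquiv.funUnique (Fin 1) ℝ) ⁻¹' (Set.Iic t) := by
    ext y
    simp [Fin.sum_univ_one, MeasurableEquiv.funUnique]
  rw [hset, (show (Measure.pi fun _ : Fin 1 => expMeasure (b + ρ))
      ((MeasurableEquiv.funUnique (Fin 1) ℝ) ⁻¹' Set.Iic t) = expMeasure (b + ρ) (Set.Iic t) by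
    exact (measurePreserving_funUnique (expMeasure (b + ρ)) (Fin 1)).measure_preimage
      measurableSet_Iic.nullMeasurableSet), expMeasure_Iic _ t (by positivity) ht]
  congr 1
  rw [FF, show (1:ℕ) - 1 = 0 from rfl, JJ_zero_eval b ρ hb hρ, KK]
  rw [Finset.Icc_self, Finset.prod_singleton]
  have h1 : (ρ + b) ≠ 0 := by positivity
  have h2 : Real.exp (-((b + ρ) * t)) = Real.exp (-(ρ + b) * t) := by rw [Real.exp_eq_exp]; ring
  rw [h2]
  push_cast
  field_simp

lemma key_lemma (b ρ : ℝ) (hb : 0 < b) (hρ : 0 < ρ) :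
    ∀ n : ℕ, ∀ t : ℝ, 0 ≤ t →
      (Measure.pi fun i : Fin (n+1) => expMeasure (b + ρ * ((i : ℕ) + 1)))
        {y | ∑ i, y i ≤ t} = ENNReal.ofReal (FF b ρ (n+1) t) := by
  intro n
  induction n with
  | zero => exact fun t ht => base_case b ρ hb hρ t ht
  | succ n ih =>
    intro t ht
    set μ : ∀ _ : Fin (n+2), Measure ℝ :=
      fun i => expMeasure (b + ρ * ((i : ℕ) + 1)) with hμ
    haveI : ∀ i : Fin (n+2), IsProbabilityMeasure (μ i) := fun i =>
      isProbabilityMeasure_expMeasure (by positivity)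
    haveI : ∀ i : Fin (n+2), SigmaFinite (μ i) := fun i => inferInstance
    haveI : ∀ j : Fin (n+1), SigmaFinite (expMeasure (b + ρ * ((j : ℕ) + 1))) := fun j => by
      haveI := isProbabilityMeasure_expMeasure
        (show (0:ℝ) < b + ρ * ((j : ℕ) + 1) by positivity)
      infer_instance
    set T : Set (ℝ × (Fin (n+1) → ℝ)) := {p | p.1 + ∑ j, p.2 j ≤ t} with hT
    have hmeasT : MeasurableSet T :=
      measurableSet_le (measurable_fst.add
        (Finset.measurable_sum Finset.univ fun j _ =>
          (measurable_pi_apply j).comp measurable_snd)) measurable_const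
    have hset : {y : Fin (n+2) → ℝ | ∑ i, y i ≤ t}
        = (MeasurableEquiv.piFinSuccAbove (fun _ : Fin (n+2) => ℝ) (Fin.last (n+1))) ⁻¹' T := by
      ext y
      simp only [Set.mem_setOf_eq, Set.mem_preimage, MeasurableEquiv.piFinSuccAbove_apply, hT]
      rw [Fin.sum_univ_succAbove (fun i => y i) (Fin.last (n+1))]
      rfl
    have hmp := measurePreserving_piFinSuccAbove μ (Fin.last (n+1))
    rw [hset, hmp.measure_preimage hmeasT.nullMeasurableSet]
    have hrates : (fun j : Fin (n+1) => μ ((Fin.last (n+1)).succAbove j))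
        = fun j : Fin (n+1) => expMeasure (b + ρ * ((j : ℕ) + 1)) := by
      funext j
      simp [hμ, Fin.succAbove_last, Fin.coe_castSucc]
    have hlast : μ (Fin.last (n+1)) = expMeasure (b + ρ * ((n:ℝ) + 2)) := by
      simp only [hμ, Fin.val_last]
      congr 1
      push_cast
      ring
    rw [Measure.prod_apply hmeasT, hrates, hlast]
    -- rewrite the inner measure
    have hinner : ∀ a : ℝ,
        (Measure.pi fun j : Fin (n+1) => expMeasure (b + ρ * ((j : ℕ) + 1)))
          (Prod.mk a ⁻¹' T)
        = ENNReal.ofReal (if a ≤ t then FF b ρ (n+1) (t - a) else 0) := by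
      intro a
      have hpre : (Prod.mk a ⁻¹' T) = {y : Fin (n+1) → ℝ | ∑ j, y j ≤ t - a} := by
        ext y
        simp only [Set.mem_preimage, Set.mem_setOf_eq, hT, le_sub_iff_add_le']
      rw [hpre]
      rcases le_or_gt a t with h | h
      · rw [if_pos h, ih (t - a) (by linarith)]
      · rw [if_neg (not_le.2 h), meas_neg b ρ hb hρ n _ (by linarith), ENNReal.ofReal_zero]
    rw [lintegral_congr hinner]
    -- convert the lintegral against the exponential measure
    set L : ℝ := b + ρ * ((n:ℝ) + 2) with hLdef
    have hL : 0 < L := by positivity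
    have hg : Measurable fun a : ℝ => ENNReal.ofReal (if a ≤ t then FF b ρ (n+1) (t - a) else 0) := by
      apply ENNReal.measurable_ofReal.comp
      apply Measurable.ite (show MeasurableSet {a : ℝ | a ≤ t} from measurableSet_Iic)
      · exact ((FF_cont b ρ (n+1)).comp (continuous_const.sub continuous_id)).measurable
      · exact measurable_const
    have hpm : Measurable (exponentialPDF L) :=
      (measurable_exponentialPDFReal L).ennreal_ofReal
    rw [expMeasure_eq_withDensity L,
      lintegral_withDensity_eq_lintegral_mul volume hpm hg]
    -- pointwise identification with an indicator function
    set ψ : ℝ → ℝ := fun a => (L * Real.exp (-(L * a))) * FF b ρ (n+1) (t - a) with hψ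
    have hψc : Continuous ψ := by
      apply Continuous.mul
      · fun_prop
      · exact (FF_cont b ρ (n+1)).comp (continuous_const.sub continuous_id)
    have hpt : ∀ a : ℝ,
        (exponentialPDF L * fun a => ENNReal.ofReal (if a ≤ t then FF b ρ (n+1) (t - a) else 0)) a
        = ENNReal.ofReal ((Set.Icc 0 t).indicator ψ a) := by
      intro a
      simp only [Pi.mul_apply]
      rcases lt_or_ge a 0 with ha | ha
      · rw [exponentialPDF_of_neg ha, zero_mul,
          Set.indicator_of_notMem (fun hmem => absurd (Set.mem_Icc.1 hmem).1 (not_le.2 ha)), ENNReal.ofReal_zero]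
      · rcases le_or_gt a t with hat | hat
        · rw [exponentialPDF_of_nonneg ha, Set.indicator_of_mem (Set.mem_Icc.2 ⟨ha, hat⟩), if_pos hat, hψ,
            ← ENNReal.ofReal_mul (by positivity)]
        · rw [if_neg (not_le.2 hat), ENNReal.ofReal_zero, mul_zero,
            Set.indicator_of_notMem (fun hmem => absurd (Set.mem_Icc.1 hmem).2 (not_le.2 hat)), ENNReal.ofReal_zero]
    rw [lintegral_congr hpt]
    have hInt : Integrable ((Set.Icc 0 t).indicator ψ) volume :=
      (hψc.integrableOn_Icc).integrable_indicator measurableSet_Icc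
    have hnn : 0 ≤ᵐ[volume] (Set.Icc 0 t).indicator ψ := by
      apply ae_of_all
      intro a
      apply Set.indicator_nonneg
      intro x hx
      have h1 : 0 ≤ FF b ρ (n+1) (t - x) := FF_nonneg b ρ hb hρ _ (by linarith [hx.2])
      have h2 : 0 < L * Real.exp (-(L * x)) := by positivity
      exact mul_nonneg h2.le h1
    rw [← ofReal_integral_eq_lintegral_ofReal hInt hnn]
    congr 1
    rw [MeasureTheory.integral_indicator measurableSet_Icc,
      MeasureTheory.integral_Icc_eq_integral_Ioc, ← intervalIntegral.integral_of_le ht]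
    have hcast : L = b + ρ * ((n : ℝ) + 2) := hLdef
    have := step_integral b ρ hb hρ n t ht
    calc ∫ a in (0:ℝ)..t, ψ a
        = ∫ a in (0:ℝ)..t, ((b + ρ * ((n:ℝ) + 2)) * Real.exp (-((b + ρ * ((n:ℝ) + 2)) * a)))
            * FF b ρ (n + 1) (t - a) := by rw [hψ, hLdef]
      _ = FF b ρ (n + 2) t := this
      _ = FF b ρ (n + 1 + 1) t := by norm_num


/-- Lower-tail bound for a sum `T* = ∑_{i=1}^z Eᵢ` of independent exponentials with
rates `b + ρi`: for every `t ≥ 0`,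
`ℙ(T* ≤ t) ≤ ∏_{i=1}^z (1 + b/(ρi)) · ρz ∫₀ᵗ e^{-(ρ+b)y}(1-e^{-ρy})^{z-1} dy`. -/
theorem sum_exponentials_lower_tail_bound
    (z : ℕ) (hz : 1 ≤ z) (b ρ : ℝ) (hb : 0 < b) (hρ : 0 < ρ) :
    ∀ t : ℝ, 0 ≤ t →
      ((Measure.pi fun i : Fin z => expMeasure (b + ρ * ((i : ℕ) + 1)))
          {y | ∑ i, y i ≤ t}).toReal ≤
        (∏ i ∈ Finset.Icc 1 z, (1 + b / (ρ * i))) *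
          (ρ * z * ∫ y in (0 : ℝ)..t,
            Real.exp (-(ρ + b) * y) * (1 - Real.exp (-ρ * y)) ^ (z - 1)) := by
  intro t ht
  obtain ⟨n, rfl⟩ : ∃ n, z = n + 1 := ⟨z - 1, by omega⟩
  rw [key_lemma b ρ hb hρ n t ht, ENNReal.toReal_ofReal (FF_nonneg b ρ hb hρ _ ht)]
  apply le_of_eq
  rw [FF, KK, mul_assoc]
  rfl
end
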